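/- (Main Lemma, first player Bob) Let D be a dinner with an odd number n of morsels (so Bob moves first and also moves last), and let m be any morsel of D. Then u_B(m) + χ_B(D − m) ≤ χ_B(D), where u_B(m) is the second coordinate of m. -/

import Mathlib

/-!
Induction on the number of morsels, proving together with the lemma its companion for an even
number of morsels: Bob's score does not decrease when the crossout starts with an even step
(removing the morsel of minimal second coordinate) instead of an odd one.

Let `a` be the morsel of least first coordinate of `D` and `b` the one of least second
coordinate of `D - a`, the first two crossout morsels. If `m = a`, the claim is the companion
for `D - a`. Otherwise `a` is also crossed out first in `D - m`; if moreover `m ≠ b`, both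
crossouts continue with `D - a - b` and the claim is the lemma for `D - a - b` and `m`; if
`m = b`, it is the lemma for `D - a - m` and its least-second-coordinate morsel `b'`, together
with `m.2 ≤ b'.2`. The companion is proved the same way, comparing the crossout of `D` with
the one that starts by removing `b`.
-/

open Finset

/-- One step of the crossout process: at Alice's steps remove the remaining morsel of
minimal first coordinate, at Bob's steps the one of minimal second coordinate. -/
noncomputable def coAux (turnA : Bool) (D : Finset (ℝ × ℝ)) : List (ℝ × ℝ) :=
  if h : D.Nonempty then
    (if turnA then (Finset.exists_min_image D Prod.fst h).choose
      else (Finset.exists_min_image D Prod.snd h).choose) ::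
      coAux (!turnA)
        (D.erase (if turnA then (Finset.exists_min_image D Prod.fst h).choose
          else (Finset.exists_min_image D Prod.snd h).choose))
  else []
termination_by D.card
decreasing_by
  apply Finset.card_erase_lt_of_mem
  split
  · exact (Finset.exists_min_image D Prod.fst h).choose_spec.1
  · exact (Finset.exists_min_image D Prod.snd h).choose_spec.1

/-- The crossout sequence of a dinner, as a list `[m₁, m₂, …, mₙ]`. -/
noncomputable def crossoutList (D : Finset (ℝ × ℝ)) : List (ℝ × ℝ) := coAux true D

/-- `crossout D i` is the `i`-th morsel `mᵢ` (1-indexed) of the crossout sequence of `D`. -/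
noncomputable def crossout (D : Finset (ℝ × ℝ)) (i : ℕ) : ℝ × ℝ :=
  (crossoutList D).getD (i - 1) (0, 0)

/-- Totally ordered preferences: distinct morsels have distinct first coordinates and
distinct second coordinates. -/
def TotallyOrderedPrefs (D : Finset (ℝ × ℝ)) : Prop :=
  (∀ p ∈ D, ∀ q ∈ D, p.1 = q.1 → p = q) ∧ (∀ p ∈ D, ∀ q ∈ D, p.2 = q.2 → p = q)

/-- Alice's crossout score: sum of first coordinates of the even-indexed crossout morsels. -/
noncomputable def chiA (D : Finset (ℝ × ℝ)) : ℝ :=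
  ∑ i ∈ Finset.Icc 1 D.card, if Even i then (crossout D i).1 else 0

/-- Bob's crossout score: sum of second coordinates of the odd-indexed crossout morsels. -/
noncomputable def chiB (D : Finset (ℝ × ℝ)) : ℝ :=
  ∑ i ∈ Finset.Icc 1 D.card, if Odd i then (crossout D i).2 else 0

lemma odd_card_erase_iff {α : Type*} [DecidableEq α] {s : Finset α} {a : α} (ha : a ∈ s) :
    Odd (s.erase a).card ↔ Even s.card := by
  rw [← card_erase_add_one ha, Nat.even_add_one, Nat.not_even_iff_odd]

lemma even_card_erase_iff {α : Type*} [DecidableEq α] {s : Finset α} {a : α} (ha : a ∈ s) :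
    Even (s.erase a).card ↔ Odd s.card := by
  rw [← card_erase_add_one ha, Nat.odd_add_one, Nat.not_odd_iff_even]

lemma TotallyOrderedPrefs.mono {D S : Finset (ℝ × ℝ)} (hD : TotallyOrderedPrefs D) (hS : S ⊆ D) :
    TotallyOrderedPrefs S :=
  ⟨fun p hp q hq => hD.1 p (hS hp) q (hS hq), fun p hp q hq => hD.2 p (hS hp) q (hS hq)⟩

noncomputable def altSnd : Bool → List (ℝ × ℝ) → ℝ
  | _, [] => 0
  | b, a :: l => (if b then a.2 else 0) + altSnd (!b) l

/-- Bob's crossout score of `D` when the first step removes the morsel of minimal first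
(`t = true`) or minimal second (`t = false`) coordinate. -/
noncomputable def chiBFrom (t : Bool) (D : Finset (ℝ × ℝ)) : ℝ := altSnd t (coAux t D)

lemma sum_range_getD_eq_altSnd (l : List (ℝ × ℝ)) (t : Bool) :
    ∑ i ∈ range l.length, (if (Even i ↔ t) then (l.getD i (0, 0)).2 else 0) = altSnd t l := by
  induction l generalizing t with
  | nil => simp [altSnd]
  | cons a l ih =>
    rw [List.length_cons, sum_range_succ', altSnd, ← ih (!t)]
    cases t <;> simp [Nat.even_add_one, add_comm]

lemma length_coAux (t : Bool) (D : Finset (ℝ × ℝ)) : (coAux t D).length = D.card := by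
  induction D using Finset.strongInduction generalizing t with
  | _ D ih =>
    rw [coAux]
    by_cases hne : D.Nonempty
    · rw [dif_pos hne, List.length_cons]
      cases t <;> simp only [Bool.false_eq_true, ↓reduceIte]
      · have hmem := (D.exists_min_image Prod.snd hne).choose_spec.1
        rw [ih _ (erase_ssubset hmem), card_erase_add_one hmem]
      · have hmem := (D.exists_min_image Prod.fst hne).choose_spec.1
        rw [ih _ (erase_ssubset hmem), card_erase_add_one hmem]
    · simp [not_nonempty_iff_eq_empty.mp hne]

lemma chiB_eq_chiBFrom_true (D : Finset (ℝ × ℝ)) : chiB D = chiBFrom true D := by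
  rw [chiB, chiBFrom, ← sum_range_getD_eq_altSnd, length_coAux, range_eq_Ico,
    ← Ico_add_one_right_eq_Icc, ← zero_add 1, ← sum_Ico_add']
  simp [crossout, crossoutList, Nat.odd_add_one]

lemma chiBFrom_empty (t : Bool) : chiBFrom t ∅ = 0 := by
  rw [chiBFrom, coAux]; simp [altSnd]

section
variable {D : Finset (ℝ × ℝ)} (hD : TotallyOrderedPrefs D)
include hD

lemma chiBFrom_true_of_forall_fst_le {a : ℝ × ℝ} (ha : a ∈ D) (hmin : ∀ p ∈ D, a.1 ≤ p.1) :
    chiBFrom true D = a.2 + chiBFrom false (D.erase a) := by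
  have hne : D.Nonempty := ⟨a, ha⟩
  obtain ⟨hc, hcmin⟩ := (D.exists_min_image Prod.fst hne).choose_spec
  have hchoose : (D.exists_min_image Prod.fst hne).choose = a :=
    hD.1 _ hc _ ha (le_antisymm (hcmin a ha) (hmin _ hc))
  rw [chiBFrom, coAux, dif_pos hne]
  simp only [hchoose, if_true]
  rfl

lemma chiBFrom_false_of_forall_snd_le {b : ℝ × ℝ} (hb : b ∈ D) (hmin : ∀ p ∈ D, b.2 ≤ p.2) :
    chiBFrom false D = chiBFrom true (D.erase b) := by
  have hne : D.Nonempty := ⟨b, hb⟩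
  obtain ⟨hc, hcmin⟩ := (D.exists_min_image Prod.snd hne).choose_spec
  have hchoose : (D.exists_min_image Prod.snd hne).choose = b :=
    hD.2 _ hc _ hb (le_antisymm (hcmin b hb) (hmin _ hc))
  rw [chiBFrom, coAux, dif_pos hne]
  simp only [hchoose]
  simp [altSnd, chiBFrom]

end

def CrossoutBounds (D : Finset (ℝ × ℝ)) : Prop :=
  (Odd D.card → ∀ m ∈ D, m.2 + chiBFrom true (D.erase m) ≤ chiBFrom true D) ∧
    (Even D.card → chiBFrom true D ≤ chiBFrom false D)

lemma snd_add_chiBFrom_false_le {S : Finset (ℝ × ℝ)} (hS : TotallyOrderedPrefs S)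
    (hodd : Odd S.card) (hbounds : CrossoutBounds S) {x : ℝ × ℝ} (hx : ∀ p ∈ S, x.2 ≤ p.2) :
    x.2 + chiBFrom false S ≤ chiBFrom true S := by
  obtain ⟨b, hb, hbmin⟩ := S.exists_min_image Prod.snd (card_pos.mp hodd.pos)
  rw [chiBFrom_false_of_forall_snd_le hS hb hbmin]
  linarith [hx b hb, hbounds.1 hodd b hb]

section
variable {D : Finset (ℝ × ℝ)} (hD : TotallyOrderedPrefs D) (ih : ∀ S ⊂ D, CrossoutBounds S)
include hD ih

lemma snd_add_chiBFrom_erase_le (hodd : Odd D.card) {m : ℝ × ℝ} (hm : m ∈ D) :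
    m.2 + chiBFrom true (D.erase m) ≤ chiBFrom true D := by
  obtain ⟨a, ha, hamin⟩ := D.exists_min_image Prod.fst ⟨m, hm⟩
  rw [chiBFrom_true_of_forall_fst_le hD ha hamin]
  obtain rfl | hma := eq_or_ne m a
  · linarith [(ih _ (erase_ssubset ha)).2 ((even_card_erase_iff ha).2 hodd)]
  have hDa := hD.mono (erase_subset a D)
  have hmDa : m ∈ D.erase a := mem_erase.2 ⟨hma, hm⟩
  have haDm : a ∈ D.erase m := mem_erase.2 ⟨hma.symm, ha⟩
  rw [chiBFrom_true_of_forall_fst_le (hD.mono (erase_subset m D)) haDm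
    (fun p hp => hamin p (mem_of_mem_erase hp)), erase_right_comm (s := D) (a := m) (b := a)]
  obtain ⟨b, hb, hbmin⟩ := (D.erase a).exists_min_image Prod.snd ⟨m, hmDa⟩
  rw [chiBFrom_false_of_forall_snd_le hDa hb hbmin]
  have hDam := hDa.mono (erase_subset m _)
  obtain rfl | hmb := eq_or_ne m b
  · have hodd' := (odd_card_erase_iff hmDa).2 ((even_card_erase_iff ha).2 hodd)
    linarith [snd_add_chiBFrom_false_le hDam hodd'
      (ih _ ((erase_ssubset hmDa).trans_subset (erase_subset a D)))
      (fun p hp => hbmin p (mem_of_mem_erase hp))]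
  have hbDam : b ∈ (D.erase a).erase m := mem_erase.2 ⟨hmb.symm, hb⟩
  rw [chiBFrom_false_of_forall_snd_le hDam hbDam (fun p hp => hbmin p (mem_of_mem_erase hp)),
    erase_right_comm (s := D.erase a) (a := m) (b := b)]
  have hodd' := (odd_card_erase_iff hb).2 ((even_card_erase_iff ha).2 hodd)
  linarith [(ih _ ((erase_ssubset hb).trans_subset (erase_subset a D))).1 hodd' m
    (mem_erase.2 ⟨hmb, hmDa⟩)]

lemma chiBFrom_true_le_false (heven : Even D.card) :
    chiBFrom true D ≤ chiBFrom false D := by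
  rcases D.eq_empty_or_nonempty with rfl | hne
  · rw [chiBFrom_empty, chiBFrom_empty]
  obtain ⟨a, ha, hamin⟩ := D.exists_min_image Prod.fst hne
  obtain ⟨b, hb, hbmin⟩ := D.exists_min_image Prod.snd hne
  have hDa := hD.mono (erase_subset a D)
  have hodd := (odd_card_erase_iff ha).2 heven
  rw [chiBFrom_true_of_forall_fst_le hD ha hamin, chiBFrom_false_of_forall_snd_le hD hb hbmin]
  obtain rfl | hba := eq_or_ne b a
  · exact snd_add_chiBFrom_false_le hDa hodd (ih _ (erase_ssubset hb))
      (fun p hp => hbmin p (mem_of_mem_erase hp))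
  have hbDa : b ∈ D.erase a := mem_erase.2 ⟨hba, hb⟩
  have haDb : a ∈ D.erase b := mem_erase.2 ⟨hba.symm, ha⟩
  rw [chiBFrom_false_of_forall_snd_le hDa hbDa (fun p hp => hbmin p (mem_of_mem_erase hp)),
    chiBFrom_true_of_forall_fst_le (hD.mono (erase_subset b D)) haDb
      (fun p hp => hamin p (mem_of_mem_erase hp)), erase_right_comm (s := D) (a := b) (b := a)]
  linarith [(ih _ ((erase_ssubset hbDa).trans_subset (erase_subset a D))).2
    ((even_card_erase_iff hbDa).2 hodd)]

end

theorem crossoutBounds {D : Finset (ℝ × ℝ)} (hD : TotallyOrderedPrefs D) : CrossoutBounds D := by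
  induction D using Finset.strongInduction with
  | _ D ih =>
    have ih' : ∀ S ⊂ D, CrossoutBounds S := fun S hS => ih S hS (hD.mono hS.subset)
    exact ⟨fun hodd _ hm => snd_add_chiBFrom_erase_le hD ih' hodd hm,
      chiBFrom_true_le_false hD ih'⟩

/-- Main Lemma, first player Bob: eating any first morsel m gives Bob at most his
crossout score. -/
theorem main_lemma_bob (D : Finset (ℝ × ℝ)) (hD : TotallyOrderedPrefs D)
    (hn : Odd D.card) (m : ℝ × ℝ) (hm : m ∈ D) :
    m.2 + chiB (D.erase m) ≤ chiB D := by
  rw [chiB_eq_chiBFrom_true, chiB_eq_chiBFrom_true]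
  exact (crossoutBounds hD).1 hn m hm
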